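/- Let X_{1,n} and X_{2,n} be independent real random variables with common distribution P ∈ 𝒫_n, and let R > 0. Suppose there exist r ∈ (0, π/R) and an integer k ∈ ℤ such that inf_{n≥1} inf_{P∈𝒫_n} c_P(k;r) > 0. Then there exists c_R > 0 such that for all n ≥ 1 and all P ∈ 𝒫_n: c_R ≤ sup_{t∈ℝ:|t|>R} (1/(2π²)) E_P[inf_{q∈ℤ}(t(X_{1,n}−X_{2,n}) − 2πq)²]. -/

import Mathlib

open MeasureTheory ProbabilityTheory Real
open scoped BigOperators ENNReal NNReal

noncomputable section

/-- Euclidean space ℝ^d. -/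
abbrev Ed (d : ℕ) := EuclideanSpace ℝ (Fin d)

variable {d : ℕ}

/-- The characteristic function of a (Borel) measure on ℝ^d. -/
def charFn (μ : Measure (Ed d)) (t : Ed d) : ℂ :=
  ∫ x, Complex.exp (((inner ℝ t x : ℝ) : ℂ) * Complex.I) ∂μ

/-- Partial derivative in the k-th coordinate direction. -/
def partialD {F : Type*} [NormedAddCommGroup F] [NormedSpace ℝ F]
    (k : Fin d) (f : Ed d → F) : Ed d → F :=
  fun x => fderiv ℝ f x (EuclideanSpace.single k 1)

/-- Iterated partial derivative `D^ν` for a multi-index ν. -/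
def mDeriv {F : Type*} [NormedAddCommGroup F] [NormedSpace ℝ F]
    (ν : Fin d → ℕ) (f : Ed d → F) : Ed d → F :=
  (List.finRange d).foldr (fun k g => (partialD k)^[ν k] g) f

/-- The ν-th cumulant of a measure μ on ℝ^d:
`κ_ν = (−i)^{|ν|} D^ν (log φ_μ)(0)` where φ_μ is the characteristic function. -/
def cumulant (μ : Measure (Ed d)) (ν : Fin d → ℕ) : ℂ :=
  (-Complex.I) ^ (∑ k, ν k) * mDeriv ν (fun t => Complex.log (charFn μ t)) 0

/-- The finite set of multi-indices ν ∈ ℤ₊^d with |ν| = j. -/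
def multiIdx (d j : ℕ) : Finset (Fin d → ℕ) :=
  (Fintype.piFinset fun _ : Fin d => Finset.range (j + 1)).filter fun ν => ∑ k, ν k = j

/-- The differential operator `χ̄_j(−D)` applied to f, where
`χ̄_j(z) = j! Σ_{|ν|=j} (χ_ν/ν!) z^ν`. -/
def chiOpApply (χ : (Fin d → ℕ) → ℂ) (j : ℕ) (f : Ed d → ℂ) : Ed d → ℂ :=
  fun x => (j.factorial : ℂ) * (-1 : ℂ) ^ j *
    ∑ ν ∈ multiIdx d j, (χ ν / ∏ k, ((ν k).factorial : ℂ)) * mDeriv ν f x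

/-- The Edgeworth polynomial operator `P̃_j(−D; {χ_ν})` applied to f:
`P̃_j = Σ_{m=1}^{j} (1/m!) Σ*_{j_1+⋯+j_m=j} ∏_k χ̄_{j_k+2}(−D)/(j_k+2)!`,
encoded as a sum over compositions of j. -/
def edgeworthOp (χ : (Fin d → ℕ) → ℂ) (j : ℕ) (f : Ed d → ℂ) : Ed d → ℂ :=
  fun x => ∑ c : Composition j, ((c.length.factorial : ℂ))⁻¹ *
    (c.blocks.foldr
      (fun jk g => fun y => (((jk + 2).factorial : ℂ))⁻¹ * chiOpApply χ (jk + 2) g y) f) x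

/-- The standard normal density on ℝ^d. -/
def gaussDensity (d : ℕ) (x : Ed d) : ℝ :=
  (2 * π) ^ (-(d : ℝ) / 2) * Real.exp (-‖x‖ ^ 2 / 2)

/-- The density of the order-s Edgeworth signed measure
`Σ_{j=0}^{s−2} n^{−j/2} P̃_j(−D;{χ_ν}) φ(x)`. -/
def edgeworthDensity (χ : (Fin d → ℕ) → ℂ) (n s : ℕ) (x : Ed d) : ℝ :=
  (∑ j ∈ Finset.range (s - 1), (((n : ℝ) ^ (-(j : ℝ) / 2) : ℝ) : ℂ) *
    edgeworthOp χ j (fun y => ((gaussDensity d y : ℝ) : ℂ)) x).re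

/-- The order-s Edgeworth signed measure, as a set function `A ↦ ∫_A (density)`. -/
def edgeworthSM (χ : (Fin d → ℕ) → ℂ) (n s : ℕ) (A : Set (Ed d)) : ℝ :=
  ∫ x in A, edgeworthDensity χ n s x

/-- The standard normal distribution Φ = N(0, I_d) on ℝ^d. -/
def stdGaussian (d : ℕ) : Measure (Ed d) :=
  volume.withDensity fun x => ENNReal.ofReal (gaussDensity d x)

/-- Modulus of continuity `ω_f(x;ε) = sup {|f z − f y| : z,y ∈ B(x;ε)}`. -/
def oscil (f : Ed d → ℝ) (x : Ed d) (ε : ℝ) : ℝ :=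
  sSup {r | ∃ z ∈ Metric.ball x ε, ∃ y ∈ Metric.ball x ε, r = |f z - f y|}

/-- Averaged modulus of continuity `ω̄_f(ε;μ) = ∫ ω_f(x;ε) dμ(x)`. -/
def oscilBar (f : Ed d → ℝ) (ε : ℝ) (μ : Measure (Ed d)) : ℝ :=
  ∫ x, oscil f x ε ∂μ

/-- `M_s(f) = sup_x |f(x)|/(1+‖x‖^s)`. -/
def Msup (s : ℕ) (f : Ed d → ℝ) : ℝ := ⨆ x : Ed d, |f x| / (1 + ‖x‖ ^ s)

/-- The (uncentered) second-moment matrix `E[X X']` of a measure on ℝ^d. -/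
def covMat (μ : Measure (Ed d)) : Matrix (Fin d) (Fin d) ℝ :=
  Matrix.of fun k l => ∫ x, x k * x l ∂μ

open Classical in
/-- Inverse square root of a matrix (junk value if not positive semidefinite). -/
def matInvSqrt (M : Matrix (Fin d) (Fin d) ℝ) : Matrix (Fin d) (Fin d) ℝ :=
  if h : M.PosSemidef then ((h.1.eigenvectorUnitary : Matrix (Fin d) (Fin d) ℝ) *
    Matrix.diagonal ((↑) ∘ Real.sqrt ∘ h.1.eigenvalues) *
    (star h.1.eigenvectorUnitary : Matrix (Fin d) (Fin d) ℝ))⁻¹ else 1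

open Classical in
/-- Square root of a matrix (junk value if not positive semidefinite). -/
def matSqrt (M : Matrix (Fin d) (Fin d) ℝ) : Matrix (Fin d) (Fin d) ℝ :=
  if h : M.PosSemidef then (h.1.eigenvectorUnitary : Matrix (Fin d) (Fin d) ℝ) *
    Matrix.diagonal ((↑) ∘ Real.sqrt ∘ h.1.eigenvalues) *
    (star h.1.eigenvectorUnitary : Matrix (Fin d) (Fin d) ℝ) else 1

/-- Matrix-vector multiplication on Euclidean space. -/
def mulVecE (M : Matrix (Fin d) (Fin d) ℝ) (x : Ed d) : Ed d :=
  (EuclideanSpace.equiv (Fin d) ℝ).symm (M.mulVec (EuclideanSpace.equiv (Fin d) ℝ x))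

/-- Marginal distribution of the i-th coordinate. -/
def marginal {n : ℕ} (P : Measure (Fin n → Ed d)) (i : Fin n) : Measure (Ed d) :=
  P.map fun ω => ω i

/-- `V_{n,P} = (1/n) Σ_i Var_P(X_{i,n})` (for mean-zero coordinates). -/
def Vmat {d : ℕ} (n : ℕ) (P : Measure (Fin n → Ed d)) : Matrix (Fin d) (Fin d) ℝ :=
  (n : ℝ)⁻¹ • ∑ i : Fin n, covMat (marginal P i)

/-- `Q_{n,P}`, the distribution of `n^{−1/2} Σ_i V_{n,P}^{−1/2} X_{i,n}`. -/
def Qmeas {d : ℕ} (n : ℕ) (P : Measure (Fin n → Ed d)) : Measure (Ed d) :=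
  P.map fun ω => (Real.sqrt n)⁻¹ • ∑ i, mulVecE (matInvSqrt (Vmat n P)) (ω i)

/-- `χ̄_{ν,P}`, the average over i of the ν-th cumulant of `V_{n,P}^{−1/2} X_{i,n}`. -/
def chiBar {d : ℕ} (n : ℕ) (P : Measure (Fin n → Ed d)) (ν : Fin d → ℕ) : ℂ :=
  (n : ℂ)⁻¹ * ∑ i : Fin n, cumulant ((marginal P i).map (mulVecE (matInvSqrt (Vmat n P)))) ν

/-- `ρ_{n,s,P} = (1/n) Σ_i E_P ‖X_{i,n}‖^s`. -/
def rhoM {d : ℕ} (n s : ℕ) (P : Measure (Fin n → Ed d)) : ℝ :=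
  (n : ℝ)⁻¹ * ∑ i : Fin n, ∫ ω, ‖ω i‖ ^ s ∂P

/-- The mean weak Cramér condition with parameter (b,c,R) for a collection of
joint distributions of (X_{i,n})_{i=1}^n. -/
def meanWeakCramer {d : ℕ} {n : ℕ} (Ps : Set (Measure (Fin n → Ed d))) (b c R : ℝ) : Prop :=
  ∀ P ∈ Ps, ∀ t : Ed d, R < ‖t‖ →
    (n : ℝ)⁻¹ * ∑ i : Fin n, ‖charFn (marginal P i) t‖ ≤ 1 - c / ‖t‖ ^ b

/-- The weak Cramér condition with parameter (b,c,R) for a single distribution. -/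
def weakCramerMeas (μ : Measure (Ed d)) (b c R : ℝ) : Prop :=
  ∀ t : Ed d, R < ‖t‖ → ‖charFn μ t‖ ≤ 1 - c / ‖t‖ ^ b

/-- The empirical (resampling) measure `(1/n) Σ_j δ_{x_j}`. -/
def empMeas {d n : ℕ} (x : Fin n → Ed d) : Measure (Ed d) :=
  ((n : ℝ≥0∞))⁻¹ • ∑ i : Fin n, Measure.dirac (x i)

/-- Sample mean. -/
def sMean {d n : ℕ} (x : Fin n → Ed d) : Ed d := (n : ℝ)⁻¹ • ∑ i, x i

/-- Sample covariance matrix `V̂_n`. -/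
def Vhat {d n : ℕ} (x : Fin n → Ed d) : Matrix (Fin d) (Fin d) ℝ :=
  (n : ℝ)⁻¹ • ∑ i : Fin n, Matrix.of fun k l => (x i k - sMean x k) * (x i l - sMean x l)

/-- The bootstrap distribution `Q_{n,ℱ_n}`: the conditional distribution, given the
sample x, of `√n V̂_n^{−1/2}(X̄* − X̄)` where `X̄*` is the mean of n i.i.d. draws from
the empirical measure of x. -/
def bootQ {d n : ℕ} (x : Fin n → Ed d) : Measure (Ed d) :=
  (Measure.pi fun _ : Fin n => empMeas x).map
    fun y => Real.sqrt n • mulVecE (matInvSqrt (Vhat x)) (sMean y - sMean x)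

/-- `χ*_ν`, the ν-th cumulant of the conditional distribution of a bootstrap draw
given the sample, i.e. of the empirical measure. -/
def bootChi {d n : ℕ} (x : Fin n → Ed d) (ν : Fin d → ℕ) : ℂ := cumulant (empMeas x) ν

/-- `Q̃_{n,ℱ_n}`, the Edgeworth signed measure built from the bootstrap cumulants. -/
def bootQtilde {d n : ℕ} (s : ℕ) (x : Fin n → Ed d) (A : Set (Ed d)) : ℝ :=
  edgeworthSM (bootChi x) n s A

/-- Event `ℰ_{n,0}(ρ̄) = {(1/n) Σ ‖X_i‖^s ≤ ρ̄}`. -/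
def Ev0 {d : ℕ} (n s : ℕ) (ρ : ℝ) : Set (Fin n → Ed d) :=
  {x | (n : ℝ)⁻¹ * ∑ i, ‖x i‖ ^ s ≤ ρ}

/-- Event `ℰ_{n,1}(c₁) = {smallest eigenvalue of V̂_n ≥ c₁}` (via the quadratic form). -/
def Ev1 {d : ℕ} (n : ℕ) (c₁ : ℝ) : Set (Fin n → Ed d) :=
  {x | ∀ v : Ed d, c₁ * ‖v‖ ^ 2 ≤ (inner ℝ v (mulVecE (Vhat x) v) : ℝ)}

/-- Event `ℰ_{n,2}(c₂)`: all mixed absolute moments of the sample of order ≤ s are ≤ c₂. -/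
def Ev2 {d : ℕ} (n s : ℕ) (c₂ : ℝ) : Set (Fin n → Ed d) :=
  {x | ∀ v : Fin d → ℕ, (∑ k, v k) ≤ s → (n : ℝ)⁻¹ * ∑ i, ∏ k, |x i k| ^ (v k) ≤ c₂}

/-- `ξ(u,v;t) = inf_{q∈ℤ} (t'(u−v) − 2πq)²`. -/
def xiFn {d : ℕ} (t u v : Ed d) : ℝ := ⨅ q : ℤ, ((inner ℝ t (u - v) : ℝ) - 2 * π * (q : ℝ)) ^ 2

/-- Condition (★): `c_R ≤ sup_{‖t‖>R} (1/(2π²)) E_P[inf_q (t'(X₁−X₂) − 2πq)²]`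
for X₁, X₂ i.i.d. with distribution P. -/
def condStar {d : ℕ} (P : Measure (Ed d)) (R cR : ℝ) : Prop :=
  cR ≤ ⨆ t : {t : Ed d // R < ‖t‖},
    (2 * π ^ 2)⁻¹ * ∫ p : Ed d × Ed d, xiFn t.1 p.1 p.2 ∂(P.prod P)


/-- `c_P(k;r)`: the contribution to `E[inf_q(t(X₁−X₂)−2πq)²]` from the period cell
`(rk, r(k+1)]`, with the reference lattice point `rk` for even k and `r(k+1)` for odd k. -/
def cPfn (μ : Measure ℝ) (k : ℤ) (r : ℝ) : ℝ :=
  if Even k then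
    ∫ p : ℝ × ℝ,
      (Set.Ioc (r * (k : ℝ)) (r * ((k : ℝ) + 1))).indicator
        (fun z => (z - r * (k : ℝ)) ^ 2) (p.1 - p.2) ∂(μ.prod μ)
  else
    ∫ p : ℝ × ℝ,
      (Set.Ioc (r * (k : ℝ)) (r * ((k : ℝ) + 1))).indicator
        (fun z => (z - r * ((k : ℝ) + 1)) ^ 2) (p.1 - p.2) ∂(μ.prod μ)

/-!
The integrand `⨅ q : ℤ, (w - 2πq)²` is the squared norm of `w` in `ℝ / 2πℤ`; it is at most `π²`,
and equals `(w - 2πm)²` as soon as `|w - 2πm| ≤ π`. Take `t = π / r`, so `|t| > R`. Multiplication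
by `t` sends the even endpoint `r j` of the cell `(rk, r(k+1)]` into `2πℤ` and the cell into a
half-period around it, so on the cell the integrand at `t` dominates `t²` times the integrand of
`c_P(k;r)`. Hence the expectation at `t` is at least `t² c_P(k;r) ≥ t² ε`.
-/

namespace AddCircle

theorem coe_sub_intCast_mul_period (p x : ℝ) (m : ℤ) : ((x - m * p : ℝ) : AddCircle p) = x := by
  rw [← zsmul_eq_mul, coe_sub, coe_zsmul, coe_period, smul_zero, sub_zero]

theorem norm_coe_sq_eq_iInf (p x : ℝ) : ‖(x : AddCircle p)‖ ^ 2 = ⨅ q : ℤ, (x - p * q) ^ 2 := by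
  have hbdd : BddBelow (Set.range fun q : ℤ => (x - p * q) ^ 2) :=
    ⟨0, by rintro _ ⟨q, rfl⟩; positivity⟩
  refine le_antisymm (le_ciInf fun q => ?_) (ciInf_le_of_le hbdd (round (p⁻¹ * x)) ?_)
  · rw [← coe_sub_intCast_mul_period p x q, ← sq_abs (x - p * q), mul_comm p]
    exact pow_le_pow_left₀ (norm_nonneg _) QuotientAddGroup.norm_mk_le_norm 2
  · rw [norm_eq, sq_abs, mul_comm p]

theorem norm_coe_eq_abs_sub_intCast_mul {p x : ℝ} (hp : p ≠ 0) (m : ℤ)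
    (h : |x - m * p| ≤ |p| / 2) : ‖(x : AddCircle p)‖ = |x - m * p| := by
  rw [← coe_sub_intCast_mul_period p x m, norm_coe_eq_abs_iff p hp]
  exact h

theorem integrable_norm_coe_sq {α : Type*} [MeasurableSpace α] {μ : Measure α} [IsFiniteMeasure μ]
    {p : ℝ} (hp : p ≠ 0) {g : α → ℝ} (hg : Measurable g) :
    Integrable (fun a => ‖(g a : AddCircle p)‖ ^ 2) μ := by
  refine Integrable.of_bound ?_ ((|p| / 2) ^ 2) (ae_of_all _ fun a => ?_)
  · exact ((continuous_norm.comp (AddCircle.continuous_mk' p)).pow 2).measurable.comp hg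
      |>.aestronglyMeasurable
  · rw [Real.norm_eq_abs, abs_of_nonneg (by positivity)]
    exact pow_le_pow_left₀ (norm_nonneg _) (norm_le_half_period p hp) 2

theorem integral_norm_coe_sq_le {α : Type*} [MeasurableSpace α] {μ : Measure α}
    [IsFiniteMeasure μ] {p : ℝ} (hp : p ≠ 0) (g : α → ℝ) :
    ∫ a, ‖(g a : AddCircle p)‖ ^ 2 ∂μ ≤ (|p| / 2) ^ 2 * μ.real Set.univ := by
  refine le_trans (Real.le_norm_self _) (norm_integral_le_of_norm_le_const (ae_of_all _ fun a => ?_))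
  rw [Real.norm_eq_abs, abs_of_nonneg (by positivity)]
  exact pow_le_pow_left₀ (norm_nonneg _) (norm_le_half_period p hp) 2

end AddCircle

theorem exists_even_cPfn_eq_integral (μ : Measure ℝ) (k : ℤ) (r : ℝ) :
    ∃ j : ℤ, Even j ∧ (j = k ∨ j = k + 1) ∧ cPfn μ k r = ∫ p : ℝ × ℝ,
      (Set.Ioc (r * k) (r * (k + 1))).indicator (fun z => (z - r * j) ^ 2) (p.1 - p.2)
        ∂(μ.prod μ) := by
  by_cases hk : Even k
  · exact ⟨k, hk, .inl rfl, by rw [cPfn, if_pos hk]⟩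
  · exact ⟨k + 1, Int.even_add_one.2 hk, .inr rfl, by rw [cPfn, if_neg hk]; push_cast; rfl⟩

theorem sq_mul_indicator_cell_le {r : ℝ} (hr : 0 < r) {k j : ℤ} (hj : Even j)
    (hjk : j = k ∨ j = k + 1) (z : ℝ) :
    (π / r) ^ 2 * (Set.Ioc (r * k) (r * (k + 1))).indicator (fun z => (z - r * j) ^ 2) z
      ≤ ‖(π / r * z : AddCircle (2 * π))‖ ^ 2 := by
  by_cases hz : z ∈ Set.Ioc (r * k) (r * (k + 1))
  · obtain ⟨m, rfl⟩ := hj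
    have hdist : |z - r * (m + m : ℤ)| ≤ r := by
      obtain ⟨hz₁, hz₂⟩ := hz
      rw [abs_le]
      rcases hjk with h | h <;> rw [h] <;> push_cast <;> constructor <;> nlinarith
    have hshift : π / r * z - m * (2 * π) = π / r * (z - r * (m + m : ℤ)) := by
      push_cast; field_simp; ring
    have hhalf : |π / r * z - m * (2 * π)| ≤ |2 * π| / 2 := by
      rw [hshift, abs_mul, abs_of_pos (by positivity : 0 < π / r), abs_of_pos two_pi_pos]
      calc π / r * |z - r * (m + m : ℤ)| ≤ π / r * r := by gcongr
        _ = 2 * π / 2 := by field_simp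
    rw [Set.indicator_of_mem hz,
      AddCircle.norm_coe_eq_abs_sub_intCast_mul two_pi_pos.ne' m hhalf, hshift, sq_abs, mul_pow]
  · rw [Set.indicator_of_notMem hz, mul_zero]
    positivity

theorem sq_mul_cPfn_le_integral {μ : Measure ℝ} [IsFiniteMeasure μ] {r : ℝ} (hr : 0 < r)
    (k : ℤ) : (π / r) ^ 2 * cPfn μ k r
      ≤ ∫ p : ℝ × ℝ, ‖(π / r * (p.1 - p.2) : AddCircle (2 * π))‖ ^ 2 ∂(μ.prod μ) := by
  obtain ⟨j, hj, hjk, hcell⟩ := exists_even_cPfn_eq_integral μ k r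
  rw [hcell, ← integral_const_mul]
  refine integral_mono_of_nonneg (ae_of_all _ fun p => ?_)
    (AddCircle.integrable_norm_coe_sq two_pi_pos.ne' (by fun_prop))
    (ae_of_all _ fun p => sq_mul_indicator_cell_le hr hj hjk _)
  exact mul_nonneg (sq_nonneg _) (Set.indicator_nonneg (fun _ _ => sq_nonneg _) _)

/-- **Sufficiency of a single cell (Section 3.1, condition (3.4)).** If there exist
`r ∈ (0, π/R)` and `k ∈ ℤ` with `inf_{n≥1} inf_{P∈𝒫ₙ} c_P(k;r) > 0`, then condition (★)
holds in dimension one: there is `c_R > 0` with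
`c_R ≤ sup_{|t|>R} (1/(2π²)) E_P[inf_{q∈ℤ}(t(X₁−X₂)−2πq)²]` for all `n ≥ 1`, `P ∈ 𝒫ₙ`. -/
theorem condStar_of_cell_lower_bound
    (Ps : ℕ → Set (Measure ℝ))
    (hprob : ∀ n, ∀ P ∈ Ps n, IsProbabilityMeasure P)
    (R : ℝ) (hR : 0 < R)
    (r : ℝ) (hr : r ∈ Set.Ioo 0 (π / R)) (k : ℤ)
    (ε : ℝ) (hε : 0 < ε)
    (hcell : ∀ n, 1 ≤ n → ∀ P ∈ Ps n, ε ≤ cPfn P k r) :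
    ∃ cR : ℝ, 0 < cR ∧ ∀ n, 1 ≤ n → ∀ P ∈ Ps n,
      cR ≤ ⨆ t : {t : ℝ // R < |t|},
        (2 * π ^ 2)⁻¹ *
          ∫ p : ℝ × ℝ, (⨅ q : ℤ, ((t : ℝ) * (p.1 - p.2) - 2 * π * (q : ℝ)) ^ 2)
            ∂(P.prod P) := by
  obtain ⟨hr₀, hrR⟩ := hr
  have htR : R < |π / r| := by
    rw [abs_of_pos (by positivity), lt_div_iff₀ hr₀, ← lt_div_iff₀' hR]
    exact hrR
  refine ⟨(2 * π ^ 2)⁻¹ * ((π / r) ^ 2 * ε), by positivity, fun n hn P hP => ?_⟩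
  have := hprob n P hP
  simp_rw [← AddCircle.norm_coe_sq_eq_iInf]
  refine le_ciSup_of_le ⟨(2 * π ^ 2)⁻¹ * ((|2 * π| / 2) ^ 2 * (P.prod P).real Set.univ), ?_⟩
    ⟨π / r, htR⟩ (mul_le_mul_of_nonneg_left ?_ (by positivity))
  · rintro _ ⟨t, rfl⟩
    exact mul_le_mul_of_nonneg_left
      (AddCircle.integral_norm_coe_sq_le two_pi_pos.ne' _) (by positivity)
  · calc (π / r) ^ 2 * ε ≤ (π / r) ^ 2 * cPfn P k r := by gcongr; exact hcell n hn P hP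
      _ ≤ _ := sq_mul_cPfn_le_integral hr₀ k
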